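/- Let p ∈ (0,1) and let F ∈ F_1^+ be a cdf that is continuous and strictly increasing at x_p := F^{-1}(p). Let F_n be the empirical cdf of independent random variables X_1, …, X_n, each with cdf F. Then √n · Γ_p(F, F_n) converges to 0 in probability as n → ∞. -/

import Mathlib

open MeasureTheory ProbabilityTheory Filter Set

/-- The cumulative distribution function of a probability measure `μ` on `ℝ`. -/
noncomputable def cdfOf (μ : Measure ℝ) : ℝ → ℝ := fun x => (μ (Iic x)).toReal

/-- The quantile function of a cdf `F`: `F⁻¹(p) = inf {x : F x ≥ p}`. -/
noncomputable def qtl (F : ℝ → ℝ) (p : ℝ) : ℝ := sInf {x | p ≤ F x}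

/-- The "gap" functional
`Γ_p(F,G) = ∫_p^1 (F⁻¹(u) − G⁻¹(u)) du − ∫_{F⁻¹(p)}^∞ (G(x) − F(x)) dx`. -/
noncomputable def gapFun (p : ℝ) (F G : ℝ → ℝ) : ℝ :=
  (∫ u in p..1, (qtl F u - qtl G u)) - ∫ x in Ioi (qtl F p), (G x - F x)

/-- The empirical cdf `F_n` built from the first `n` of the random variables `X`,
at the sample point `ω`: `F_n(t) = (1/n) ∑_{i<n} 1{X_i(ω) ≤ t}`. -/
noncomputable def empCdf {Ω : Type*} (X : ℕ → Ω → ℝ) (n : ℕ) (ω : Ω) : ℝ → ℝ :=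
  fun t => (∑ i ∈ Finset.range n, if X i ω ≤ t then (1 : ℝ) else 0) / n

/-!
Write `c = F⁻¹(p)` and let `G` be any cdf in `F₁⁺`. Computing `∫_p^1 (G⁻¹(u) - c) du` by
Fubini over the region between the graph of `G⁻¹` and the level `c` turns the gap into
`Γ_p(F, G) = ∫_c^∞ (p - G)⁺ + ∫_{-∞}^c (G - p)⁺`. Both integrands vanish outside the segment
between `c` and `q = G⁻¹(p)` and are bounded there by `|G(c) - p|`, so
`0 ≤ Γ_p(F, G) ≤ |G⁻¹(p) - F⁻¹(p)| · |G(c) - F(c)|`, using `F(c) = p` by continuity.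
For `G = F_n` the first factor tends to `0` almost surely (strong law at rational points and
strict increase of `F` at `c`), while `√n |F_n(c) - F(c)|` is bounded in probability by
Chebyshev's inequality.
-/

open Topology
open scoped ENNReal

lemma integrable_of_lintegral_ofReal_ne_top {α : Type*} [MeasurableSpace α] {μ : Measure α}
    {f : α → ℝ} (hf : AEStronglyMeasurable f μ) (hpos : ∫⁻ a, ENNReal.ofReal (f a) ∂μ ≠ ⊤)
    (hneg : ∫⁻ a, ENNReal.ofReal (-f a) ∂μ ≠ ⊤) : Integrable f μ := by
  refine ⟨hf, (hasFiniteIntegral_iff_norm f).2 ?_⟩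
  calc ∫⁻ a, ENNReal.ofReal ‖f a‖ ∂μ ≤ ∫⁻ a, (ENNReal.ofReal (f a) + ENNReal.ofReal (-f a)) ∂μ :=
        lintegral_mono fun a => by
          rw [Real.norm_eq_abs, abs_eq_max_neg, ENNReal.ofReal_max]
          exact max_le le_self_add le_add_self
    _ = (∫⁻ a, ENNReal.ofReal (f a) ∂μ) + ∫⁻ a, ENNReal.ofReal (-f a) ∂μ :=
        lintegral_add_left' hf.aemeasurable.ennreal_ofReal _
    _ < ⊤ := ENNReal.add_lt_top.2 ⟨hpos.lt_top, hneg.lt_top⟩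

lemma setIntegral_le_mul_measureReal {α : Type*} [MeasurableSpace α] {μ : Measure α}
    {s t : Set α} {f : α → ℝ} {C : ℝ} (hs : MeasurableSet s) (hts : t ⊆ s) (ht : μ t < ⊤)
    (h0 : ∀ x ∈ s \ t, f x = 0) (hC : ∀ x ∈ t, |f x| ≤ C) :
    ∫ x in s, f x ∂μ ≤ C * μ.real t := by
  rw [setIntegral_eq_of_subset_of_forall_sdiff_eq_zero hs hts h0]
  exact (Real.le_norm_self _).trans (norm_setIntegral_le_of_norm_le_const ht hC)

lemma setLIntegral_measure_Ioi (ν : Measure ℝ) [SFinite ν] (c : ℝ) :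
    ∫⁻ x in Ioi c, ν (Ioi x) = ∫⁻ y, ENNReal.ofReal (y - c) ∂ν := by
  set A : Set (ℝ × ℝ) := {z | c < z.1 ∧ z.1 < z.2}
  have hA : MeasurableSet A :=
    (measurableSet_lt measurable_const measurable_fst).inter
      (measurableSet_lt measurable_fst measurable_snd)
  calc ∫⁻ x in Ioi c, ν (Ioi x) = (volume.prod ν) A := by
        rw [Measure.prod_apply hA, ← lintegral_indicator measurableSet_Ioi]
        refine lintegral_congr fun x => ?_
        by_cases hx : c < x
        · simp [A, hx, Ioi]
        · simp [A, hx]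
    _ = ∫⁻ y, ENNReal.ofReal (y - c) ∂ν := by
        rw [Measure.prod_apply_symm hA]
        refine lintegral_congr fun y => ?_
        rw [← Real.volume_Ioo]
        rfl

section InProbability

variable {Ω ι : Type*} [MeasurableSpace Ω]

/-- `g i = O_P(1)` along `l`. -/
def BoundedInProbability (P : Measure Ω) (g : ι → Ω → ℝ) (l : Filter ι) : Prop :=
  ∀ η > 0, ∃ M, ∀ᶠ i in l, P {ω | M ≤ |g i ω|} ≤ η

lemma tendstoInMeasure_of_abs_le_mul {P : Measure Ω} {l : Filter ι} {f g h : ι → Ω → ℝ}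
    (hf : TendstoInMeasure P f l fun _ => 0) (hg : BoundedInProbability P g l)
    (hh : ∀ᶠ i in l, ∀ ω, |h i ω| ≤ |f i ω| * |g i ω|) :
    TendstoInMeasure P h l fun _ => 0 := by
  rw [tendstoInMeasure_iff_dist] at hf ⊢
  intro ε hε
  rw [ENNReal.tendsto_nhds_zero]
  intro η hη
  obtain ⟨M, hM⟩ := hg (η / 2) (ENNReal.half_pos hη.ne')
  set M' := max M 1
  have hM' : 0 < M' := lt_max_of_lt_right one_pos
  filter_upwards [hh, hM, ENNReal.tendsto_nhds_zero.1 (hf (ε / M') (div_pos hε hM')) (η / 2)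
    (ENNReal.half_pos hη.ne')] with i hhi hgi hfi
  have hsub : {ω | ε ≤ dist (h i ω) 0} ⊆ {ω | ε / M' ≤ dist (f i ω) 0} ∪ {ω | M ≤ |g i ω|} := by
    intro ω hω
    simp only [mem_union, mem_ofPred_eq, Real.dist_eq, sub_zero] at hω ⊢
    by_contra! hcon
    have : |f i ω| * |g i ω| < ε / M' * M' :=
      mul_lt_mul'' hcon.1 (hcon.2.trans_le (le_max_left _ _)) (abs_nonneg _) (abs_nonneg _)
    rw [div_mul_cancel₀ _ hM'.ne'] at this
    linarith [hhi ω]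
  calc P {ω | ε ≤ dist (h i ω) 0} ≤ η / 2 + η / 2 :=
        (measure_mono hsub).trans ((measure_union_le _ _).trans (add_le_add hfi hgi))
    _ = η := ENNReal.add_halves η

end InProbability

section Cdf

variable {ν : Measure ℝ} [IsProbabilityMeasure ν]

lemma cdfOf_eq_cdf : cdfOf ν = cdf ν := funext fun x => (cdf_eq_real ν x).symm

lemma monotone_cdfOf : Monotone (cdfOf ν) := cdfOf_eq_cdf (ν := ν) ▸ monotone_cdf ν

lemma cdfOf_le_one (x : ℝ) : cdfOf ν x ≤ 1 := cdfOf_eq_cdf (ν := ν) ▸ cdf_le_one ν x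

lemma qtl_cdfOf_le_iff {u : ℝ} (hu0 : 0 < u) (hu1 : u < 1) (x : ℝ) :
    qtl (cdfOf ν) u ≤ x ↔ u ≤ cdfOf ν x := by
  rw [cdfOf_eq_cdf]
  set S := {x | u ≤ cdf ν x}
  have hne : S.Nonempty := ((tendsto_cdf_atTop ν).eventually (eventually_ge_nhds hu1)).exists
  have hbdd : BddBelow S := by
    obtain ⟨a, ha⟩ :=
      ((tendsto_cdf_atBot ν).eventually (eventually_lt_nhds hu0)).exists_forall_of_atBot
    exact ⟨a, fun y hy => not_lt.1 fun hya => (ha y hya.le).not_ge hy⟩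
  refine ⟨fun h => ?_, fun h => csInf_le hbdd h⟩
  -- right continuity puts the infimum itself in `S`
  have hinf : u ≤ cdf ν (sInf S) := by
    refine ge_of_tendsto (((cdf ν).right_continuous _).mono Ioi_subset_Ici_self).tendsto ?_
    filter_upwards [self_mem_nhdsWithin] with y hy
    obtain ⟨s, hs, hsy⟩ := exists_lt_of_csInf_lt hne hy
    exact hs.trans (monotone_cdf ν hsy.le)
  exact hinf.trans (monotone_cdf ν h)

lemma lt_qtl_cdfOf_iff {u : ℝ} (hu0 : 0 < u) (hu1 : u < 1) (x : ℝ) :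
    x < qtl (cdfOf ν) u ↔ cdfOf ν x < u := by
  simpa only [not_le] using (qtl_cdfOf_le_iff hu0 hu1 x).not

lemma cdfOf_qtl_of_continuousAt {p : ℝ} (hp0 : 0 < p) (hp1 : p < 1)
    (hcont : ContinuousAt (cdfOf ν) (qtl (cdfOf ν) p)) :
    cdfOf ν (qtl (cdfOf ν) p) = p := by
  refine le_antisymm ?_ ((qtl_cdfOf_le_iff hp0 hp1 _).1 le_rfl)
  refine le_of_tendsto (hcont.continuousWithinAt (s := Iio (qtl (cdfOf ν) p))).tendsto ?_
  filter_upwards [self_mem_nhdsWithin] with y hy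
  exact ((lt_qtl_cdfOf_iff hp0 hp1 y).1 hy).le

lemma one_sub_cdfOf (x : ℝ) : 1 - cdfOf ν x = ν.real (Ioi x) := by
  rw [← compl_Iic, probReal_compl_eq_one_sub measurableSet_Iic, cdfOf, measureReal_def]

lemma integrableOn_one_sub_cdfOf (hν : Integrable (fun x => max x 0) ν) (c : ℝ) :
    IntegrableOn (fun x => 1 - cdfOf ν x) (Ioi c) := by
  have hnn : ∀ x, 0 ≤ 1 - cdfOf ν x := fun x => sub_nonneg.2 (cdfOf_le_one x)
  refine ⟨(measurable_const.sub monotone_cdfOf.measurable).aestronglyMeasurable, ?_⟩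
  rw [hasFiniteIntegral_iff_ofReal (ae_of_all _ hnn)]
  calc ∫⁻ x in Ioi c, ENNReal.ofReal (1 - cdfOf ν x)
      = ∫⁻ y, ENNReal.ofReal (y - c) ∂ν := by
        simp_rw [one_sub_cdfOf, measureReal_def, ENNReal.ofReal_toReal (measure_ne_top _ _)]
        exact setLIntegral_measure_Ioi ν c
    _ ≤ ∫⁻ y, ENNReal.ofReal (max y 0 + |c|) ∂ν := lintegral_mono fun y =>
        ENNReal.ofReal_le_ofReal (by linarith [le_max_left y 0, neg_abs_le c])
    _ < ⊤ := (hν.add (integrable_const |c|)).lintegral_lt_top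

end Cdf

section Quantile

variable {ν : Measure ℝ} [IsProbabilityMeasure ν] {p : ℝ}

lemma monotoneOn_qtl_cdfOf (hp : 0 ≤ p) : MonotoneOn (qtl (cdfOf ν)) (Ioo p 1) :=
  fun _ hu _ hv huv => (qtl_cdfOf_le_iff (hp.trans_lt hu.1) hu.2 _).2 <|
    huv.trans ((qtl_cdfOf_le_iff (hp.trans_lt hv.1) hv.2 _).1 le_rfl)

lemma lintegral_ofReal_qtl_cdfOf_sub (hp : 0 ≤ p) (c : ℝ) :
    ∫⁻ u in Ioo p 1, ENNReal.ofReal (qtl (cdfOf ν) u - c) =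
      ∫⁻ x in Ioi c, ENNReal.ofReal (1 - max (cdfOf ν x) p) := by
  set A : Set (ℝ × ℝ) := {z | z.1 ∈ Ioo p 1 ∧ c < z.2 ∧ cdfOf ν z.2 < z.1}
  have hA : MeasurableSet A :=
    (measurable_fst measurableSet_Ioo).inter <|
      (measurableSet_lt measurable_const measurable_snd).inter
        (measurableSet_lt (monotone_cdfOf.measurable.comp measurable_snd) measurable_fst)
  calc ∫⁻ u in Ioo p 1, ENNReal.ofReal (qtl (cdfOf ν) u - c) = (volume.prod volume) A := by
        rw [Measure.prod_apply hA, ← lintegral_indicator measurableSet_Ioo]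
        refine lintegral_congr fun u => ?_
        by_cases hu : u ∈ Ioo p 1
        · have : Prod.mk u ⁻¹' A = Ioo c (qtl (cdfOf ν) u) := by
            ext x
            simp [A, hu.1, hu.2, lt_qtl_cdfOf_iff (hp.trans_lt hu.1) hu.2]
          rw [indicator_of_mem hu, this, Real.volume_Ioo]
        · rw [indicator_of_notMem hu, show Prod.mk u ⁻¹' A = ∅ from
            eq_empty_of_forall_notMem fun x hx => hu hx.1, measure_empty]
    _ = ∫⁻ x in Ioi c, ENNReal.ofReal (1 - max (cdfOf ν x) p) := by
        rw [Measure.prod_apply_symm hA, ← lintegral_indicator measurableSet_Ioi]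
        refine lintegral_congr fun x => ?_
        by_cases hx : c < x
        · have : (fun u => (u, x)) ⁻¹' A = Ioo (max (cdfOf ν x) p) 1 := by
            ext u
            simp only [A, mem_preimage, mem_ofPred_eq, mem_Ioo, max_lt_iff]
            tauto
          rw [indicator_of_mem (mem_Ioi.2 hx), this, Real.volume_Ioo]
        · simp [A, hx]

lemma lintegral_ofReal_sub_qtl_cdfOf (hp : 0 ≤ p) (c : ℝ) :
    ∫⁻ u in Ioo p 1, ENNReal.ofReal (c - qtl (cdfOf ν) u) =
      ∫⁻ x in Iio c, ENNReal.ofReal (max (cdfOf ν x) p - p) := by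
  set B : Set (ℝ × ℝ) := {z | z.1 ∈ Ioo p 1 ∧ z.2 < c ∧ z.1 ≤ cdfOf ν z.2}
  have hB : MeasurableSet B :=
    (measurable_fst measurableSet_Ioo).inter <|
      (measurableSet_lt measurable_snd measurable_const).inter
        (measurableSet_le measurable_fst (monotone_cdfOf.measurable.comp measurable_snd))
  calc ∫⁻ u in Ioo p 1, ENNReal.ofReal (c - qtl (cdfOf ν) u) = (volume.prod volume) B := by
        rw [Measure.prod_apply hB, ← lintegral_indicator measurableSet_Ioo]
        refine lintegral_congr fun u => ?_
        by_cases hu : u ∈ Ioo p 1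
        · have : Prod.mk u ⁻¹' B = Ico (qtl (cdfOf ν) u) c := by
            ext x
            simp [B, hu.1, hu.2, qtl_cdfOf_le_iff (hp.trans_lt hu.1) hu.2, and_comm]
          rw [indicator_of_mem hu, this, Real.volume_Ico]
        · rw [indicator_of_notMem hu, show Prod.mk u ⁻¹' B = ∅ from
            eq_empty_of_forall_notMem fun x hx => hu hx.1, measure_empty]
    _ = ∫⁻ x in Iio c, ENNReal.ofReal (max (cdfOf ν x) p - p) := by
        rw [Measure.prod_apply_symm hB, ← lintegral_indicator measurableSet_Iio]
        refine lintegral_congr fun x => ?_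
        by_cases hx : x < c
        · have : (fun u => (u, x)) ⁻¹' B = Ioo p 1 ∩ Iic (cdfOf ν x) := by
            ext u
            simp [B, hx]
          -- the endpoint `1` is irrelevant, and `cdfOf ν x ≤ 1`
          rw [indicator_of_mem (mem_Iio.2 hx), this,
            measure_congr ((Ioo_ae_eq_Ioc (μ := volume)).inter (ae_eq_refl (Iic (cdfOf ν x)))),
            Ioc_inter_Iic, min_eq_right (cdfOf_le_one x), Real.volume_Ioc]
          rcases le_total (cdfOf ν x) p with h | h <;> simp [h]
        · simp [B, hx]

lemma integrableOn_one_sub_max_cdfOf (hν : Integrable (fun x => max x 0) ν) (hp : p ≤ 1)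
    (c : ℝ) : IntegrableOn (fun x => 1 - max (cdfOf ν x) p) (Ioi c) := by
  refine (integrableOn_one_sub_cdfOf hν c).mono'
    ((measurable_const.sub (monotone_cdfOf.measurable.max measurable_const)).aestronglyMeasurable)
    (ae_of_all _ fun x => ?_)
  rw [Real.norm_eq_abs, abs_of_nonneg (sub_nonneg.2 (max_le (cdfOf_le_one x) hp))]
  linarith [le_max_left (cdfOf ν x) p]

lemma integrableOn_max_cdfOf_sub (hp0 : 0 < p) (hp1 : p < 1) (c : ℝ) :
    IntegrableOn (fun x => max (cdfOf ν x) p - p) (Iio c) := by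
  -- the integrand vanishes left of `qtl (cdfOf ν) p` and is at most `1`
  refine Integrable.mono' (g := (Ico (qtl (cdfOf ν) p) c).indicator 1)
    ((integrable_indicator_iff measurableSet_Ico).2
      (integrableOn_const measure_Ico_lt_top.ne)).integrableOn
    ((monotone_cdfOf.measurable.max measurable_const).sub measurable_const).aestronglyMeasurable
    ((ae_restrict_iff' measurableSet_Iio).2 (ae_of_all _ fun x hx => ?_))
  rw [Real.norm_eq_abs, abs_of_nonneg (sub_nonneg.2 (le_max_right _ _))]
  by_cases hq : qtl (cdfOf ν) p ≤ x
  · rw [indicator_of_mem (mem_Ico.2 ⟨hq, hx⟩), Pi.one_apply]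
    linarith [max_le (cdfOf_le_one (ν := ν) x) hp1.le]
  · rw [indicator_of_notMem fun h => hq h.1,
      max_eq_right ((lt_qtl_cdfOf_iff hp0 hp1 x).1 (not_le.1 hq)).le, sub_self]

lemma integral_qtl_cdfOf_sub (hν : Integrable (fun x => max x 0) ν) (hp0 : 0 < p) (hp1 : p < 1)
    (c : ℝ) :
    IntegrableOn (qtl (cdfOf ν)) (Ioo p 1) ∧
      ∫ u in Ioo p 1, (qtl (cdfOf ν) u - c) =
        (∫ x in Ioi c, (1 - max (cdfOf ν x) p)) - ∫ x in Iio c, (max (cdfOf ν x) p - p) := by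
  have hmeas : AEStronglyMeasurable (fun u => qtl (cdfOf ν) u - c) (volume.restrict (Ioo p 1)) :=
    ((aemeasurable_restrict_of_monotoneOn measurableSet_Ioo
      (monotoneOn_qtl_cdfOf hp0.le)).sub_const c).aestronglyMeasurable
  have hpos : ∫⁻ u in Ioo p 1, ENNReal.ofReal (qtl (cdfOf ν) u - c) =
      ENNReal.ofReal (∫ x in Ioi c, (1 - max (cdfOf ν x) p)) := by
    rw [lintegral_ofReal_qtl_cdfOf_sub hp0.le, ofReal_integral_eq_lintegral_ofReal
      (integrableOn_one_sub_max_cdfOf hν hp1.le c)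
      (ae_of_all _ fun x => sub_nonneg.2 (max_le (cdfOf_le_one x) hp1.le))]
  have hneg : ∫⁻ u in Ioo p 1, ENNReal.ofReal (-(qtl (cdfOf ν) u - c)) =
      ENNReal.ofReal (∫ x in Iio c, (max (cdfOf ν x) p - p)) := by
    simp_rw [neg_sub]
    rw [lintegral_ofReal_sub_qtl_cdfOf hp0.le, ofReal_integral_eq_lintegral_ofReal
      (integrableOn_max_cdfOf_sub hp0 hp1 c)
      (ae_of_all _ fun x => sub_nonneg.2 (le_max_right _ _))]
  have hint : IntegrableOn (fun u => qtl (cdfOf ν) u - c) (Ioo p 1) :=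
    integrable_of_lintegral_ofReal_ne_top hmeas (hpos ▸ ENNReal.ofReal_ne_top)
      (hneg ▸ ENNReal.ofReal_ne_top)
  refine ⟨(hint.add (integrableOn_const measure_Ioo_lt_top.ne)).congr_fun
    (fun u _ => sub_add_cancel _ c) measurableSet_Ioo, ?_⟩
  rw [integral_eq_lintegral_pos_part_sub_lintegral_neg_part hint, hpos, hneg,
    ENNReal.toReal_ofReal (setIntegral_nonneg measurableSet_Ioi fun x _ =>
      sub_nonneg.2 (max_le (cdfOf_le_one x) hp1.le)),
    ENNReal.toReal_ofReal (setIntegral_nonneg measurableSet_Iio fun x _ =>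
      sub_nonneg.2 (le_max_right _ _))]

end Quantile

lemma tendsto_qtl_of_eventually {ι : Type*} {l : Filter ι} {G : ι → ℝ → ℝ} {p c : ℝ}
    (hgal : ∀ᶠ i in l, ∀ x, qtl (G i) p ≤ x ↔ p ≤ G i x)
    (hlt : ∀ x < c, ∀ᶠ i in l, G i x < p) (hgt : ∀ x > c, ∀ᶠ i in l, p ≤ G i x) :
    Tendsto (fun i => qtl (G i) p) l (𝓝 c) := by
  refine tendsto_order.2 ⟨fun a ha => ?_, fun b hb => ?_⟩
  · filter_upwards [hgal, hlt a ha] with i hi hia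
    exact not_le.1 fun h => ((hi a).1 h).not_gt hia
  · obtain ⟨x, hcx, hxb⟩ := exists_between hb
    filter_upwards [hgal, hgt x hcx] with i hi hix
    exact ((hi x).2 hix).trans_lt hxb

section Gap

variable {μ ν : Measure ℝ} [IsProbabilityMeasure μ] [IsProbabilityMeasure ν] {p : ℝ}

lemma gapFun_cdfOf_eq (hμ : Integrable (fun x => max x 0) μ)
    (hν : Integrable (fun x => max x 0) ν) (hp0 : 0 < p) (hp1 : p < 1) :
    gapFun p (cdfOf μ) (cdfOf ν) =
      (∫ x in Ioi (qtl (cdfOf μ) p), (max (cdfOf ν x) p - cdfOf ν x)) +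
        ∫ x in Iio (qtl (cdfOf μ) p), (max (cdfOf ν x) p - p) := by
  set c := qtl (cdfOf μ) p
  set F := cdfOf μ
  set G := cdfOf ν
  obtain ⟨hqF, hF⟩ := integral_qtl_cdfOf_sub hμ hp0 hp1 c
  obtain ⟨hqG, hG⟩ := integral_qtl_cdfOf_sub hν hp0 hp1 c
  have hFright : ∫ x in Ioi c, (1 - max (F x) p) = ∫ x in Ioi c, (1 - F x) :=
    setIntegral_congr_fun measurableSet_Ioi fun x hx => by
      rw [max_eq_left ((qtl_cdfOf_le_iff hp0 hp1 x).1 (le_of_lt hx))]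
  have hFleft : ∫ x in Iio c, (max (F x) p - p) = 0 :=
    setIntegral_eq_zero_of_forall_eq_zero fun x hx => by
      rw [max_eq_right ((lt_qtl_cdfOf_iff hp0 hp1 x).1 hx).le, sub_self]
  have hIF := integrableOn_one_sub_cdfOf hμ c
  have hIG := integrableOn_one_sub_cdfOf hν c
  have hIGmax := integrableOn_one_sub_max_cdfOf hν hp1.le c
  have hconst : IntegrableOn (fun _ => c) (Ioo p 1) := integrableOn_const measure_Ioo_lt_top.ne
  have hqF' : IntegrableOn (fun u => qtl F u - c) (Ioo p 1) := hqF.sub hconst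
  have hqG' : IntegrableOn (fun u => qtl G u - c) (Ioo p 1) := hqG.sub hconst
  have hquant : ∫ u in Ioo p 1, (qtl F u - qtl G u) =
      (∫ u in Ioo p 1, (qtl F u - c)) - ∫ u in Ioo p 1, (qtl G u - c) := by
    rw [← integral_sub hqF' hqG']
    congr 1 with u
    ring
  have htail : ∫ x in Ioi c, (G x - F x) = (∫ x in Ioi c, (1 - F x)) - ∫ x in Ioi c, (1 - G x) := by
    rw [← integral_sub hIF hIG]
    congr 1 with x
    ring
  have hexcess : ∫ x in Ioi c, (max (G x) p - G x) =
      (∫ x in Ioi c, (1 - G x)) - ∫ x in Ioi c, (1 - max (G x) p) := by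
    rw [← integral_sub hIG hIGmax]
    congr 1 with x
    ring
  rw [gapFun, intervalIntegral.integral_of_le hp1.le, integral_Ioc_eq_integral_Ioo, hquant, hF, hG,
    hFright, hFleft, htail, hexcess]
  ring

lemma gapFun_cdfOf_nonneg (hμ : Integrable (fun x => max x 0) μ)
    (hν : Integrable (fun x => max x 0) ν) (hp0 : 0 < p) (hp1 : p < 1) :
    0 ≤ gapFun p (cdfOf μ) (cdfOf ν) := by
  rw [gapFun_cdfOf_eq hμ hν hp0 hp1]
  exact add_nonneg
    (setIntegral_nonneg measurableSet_Ioi fun x _ => sub_nonneg.2 (le_max_left _ _))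
    (setIntegral_nonneg measurableSet_Iio fun x _ => sub_nonneg.2 (le_max_right _ _))

lemma gapFun_cdfOf_le (hμ : Integrable (fun x => max x 0) μ)
    (hν : Integrable (fun x => max x 0) ν) (hp0 : 0 < p) (hp1 : p < 1) :
    gapFun p (cdfOf μ) (cdfOf ν) ≤
      |qtl (cdfOf ν) p - qtl (cdfOf μ) p| * |cdfOf ν (qtl (cdfOf μ) p) - p| := by
  set c := qtl (cdfOf μ) p
  set q := qtl (cdfOf ν) p
  set G := cdfOf ν
  set D := |G c - p|
  have hGq := qtl_cdfOf_le_iff (ν := ν) hp0 hp1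
  -- between `c` and `q` both integrands are at most `D`; elsewhere they vanish
  have hright : ∫ x in Ioi c, (max (G x) p - G x) ≤ D * volume.real (Ioo c q) := by
    refine setIntegral_le_mul_measureReal measurableSet_Ioi Ioo_subset_Ioi_self measure_Ioo_lt_top
      (fun x hx => ?_) (fun x hx => ?_)
    · rw [max_eq_left ((hGq x).1 (not_lt.1 fun h => hx.2 ⟨hx.1, h⟩)), sub_self]
    · have hGx : G x < p := not_le.1 fun h => (not_le.2 hx.2) ((hGq x).2 h)
      have hcx : G c ≤ G x := monotone_cdfOf hx.1.le
      rw [max_eq_right hGx.le, abs_le]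
      constructor <;> linarith [neg_abs_le (G c - p)]
  have hleft : ∫ x in Iio c, (max (G x) p - p) ≤ D * volume.real (Ico q c) := by
    refine setIntegral_le_mul_measureReal measurableSet_Iio Ico_subset_Iio_self measure_Ico_lt_top
      (fun x hx => ?_) (fun x hx => ?_)
    · have hGx : G x < p := not_le.1 fun h => hx.2 ⟨(hGq x).2 h, hx.1⟩
      rw [max_eq_right hGx.le, sub_self]
    · have hGx : p ≤ G x := (hGq x).1 hx.1
      have hxc : G x ≤ G c := monotone_cdfOf hx.2.le
      rw [max_eq_left hGx, abs_le]
      constructor <;> linarith [le_abs_self (G c - p)]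
  rw [gapFun_cdfOf_eq hμ hν hp0 hp1]
  calc _ ≤ D * volume.real (Ioo c q) + D * volume.real (Ico q c) := add_le_add hright hleft
    _ = |q - c| * D := by
      rw [Real.volume_real_Ioo, Real.volume_real_Ico, ← mul_add, ← neg_sub q c,
        max_zero_add_max_neg_zero_eq_abs_self, mul_comm]

end Gap

section Empirical

variable {Ω : Type*}

/-- The empirical distribution `n⁻¹ ∑_{i<n} δ_{X_i(ω)}`; through `cdfOf_empMeasure` the facts
about cdfs of probability measures apply to `empCdf`. -/
noncomputable def empMeasure (X : ℕ → Ω → ℝ) (n : ℕ) (ω : Ω) : Measure ℝ :=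
  (n : ℝ≥0∞)⁻¹ • ∑ i ∈ Finset.range n, Measure.dirac (X i ω)

lemma isProbabilityMeasure_empMeasure (X : ℕ → Ω → ℝ) {n : ℕ} (hn : n ≠ 0) (ω : Ω) :
    IsProbabilityMeasure (empMeasure X n ω) :=
  ⟨by simp [empMeasure, ENNReal.inv_mul_cancel, hn]⟩

lemma cdfOf_empMeasure (X : ℕ → Ω → ℝ) (n : ℕ) (ω : Ω) :
    cdfOf (empMeasure X n ω) = empCdf X n ω := by
  ext t
  simp [cdfOf, empCdf, empMeasure, Measure.dirac_apply' _ measurableSet_Iic,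
    indicator_apply, div_eq_inv_mul]

lemma integrable_empMeasure (X : ℕ → Ω → ℝ) {n : ℕ} (hn : n ≠ 0) (ω : Ω) (f : ℝ → ℝ) :
    Integrable f (empMeasure X n ω) :=
  (integrable_finsetSum_measure.2 fun _ _ => integrable_dirac enorm_lt_top).smul_measure
    (ENNReal.inv_ne_top.2 (Nat.cast_ne_zero.2 hn))

lemma qtl_empCdf_le_iff (X : ℕ → Ω → ℝ) {n : ℕ} (hn : n ≠ 0) (ω : Ω) {u : ℝ} (hu0 : 0 < u)
    (hu1 : u < 1) (x : ℝ) : qtl (empCdf X n ω) u ≤ x ↔ u ≤ empCdf X n ω x := by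
  have := isProbabilityMeasure_empMeasure X hn ω
  rw [← cdfOf_empMeasure]
  exact qtl_cdfOf_le_iff hu0 hu1 x

lemma empCdf_eq_average (X : ℕ → Ω → ℝ) (n : ℕ) (ω : Ω) (t : ℝ) :
    empCdf X n ω t = (∑ i ∈ Finset.range n, (Iic t).indicator (1 : ℝ → ℝ) (X i ω)) / n := by
  simp [empCdf, indicator_apply]

lemma monotone_empCdf (X : ℕ → Ω → ℝ) (n : ℕ) (ω : Ω) : Monotone (empCdf X n ω) :=
  fun s t hst => by
    simp only [empCdf_eq_average]
    gcongr with i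
    exact zero_le_one

end Empirical

section Sampling

variable {Ω : Type*} [MeasurableSpace Ω] {P : Measure Ω}

lemma integral_indicator_Iic_comp {Y : Ω → ℝ} (hY : Measurable Y) (t : ℝ) :
    ∫ ω, (Iic t).indicator 1 (Y ω) ∂P = cdfOf (P.map Y) t := by
  rw [← integral_map (f := (Iic t).indicator 1) hY.aemeasurable
    (measurable_const.indicator measurableSet_Iic).aestronglyMeasurable,
    integral_indicator_one measurableSet_Iic]
  rfl

variable [IsProbabilityMeasure P] {μ : Measure ℝ} {X : ℕ → Ω → ℝ}

lemma measure_le_abs_sqrt_mul_average_sub_le {Y : ℕ → Ω → ℝ} (hY : ∀ i, Measurable (Y i))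
    (hindep : iIndepFun Y P) (hbdd : ∀ i ω, Y i ω ∈ Icc (0 : ℝ) 1) {m : ℝ} (hm : ∀ i, P[Y i] = m)
    {n : ℕ} (hn : n ≠ 0) {M : ℝ} (hM : 0 < M) :
    P {ω | M ≤ |√n * ((∑ i ∈ Finset.range n, Y i ω) / n - m)|} ≤
      ENNReal.ofReal (1 / (4 * M ^ 2)) := by
  have hL2 : ∀ i, MemLp (Y i) 2 P := fun i =>
    MemLp.of_bound (hY i).aestronglyMeasurable 1 (ae_of_all _ fun ω => by
      rw [Real.norm_eq_abs, abs_of_nonneg (hbdd i ω).1]; exact (hbdd i ω).2)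
  set S := ∑ i ∈ Finset.range n, Y i with hSdef
  have hS : MemLp S 2 P := memLp_finsetSum' _ fun i _ => hL2 i
  have hmeanS : P[S] = n * m := by
    simp only [hSdef, Finset.sum_apply]
    rw [integral_finsetSum _ fun i _ => (hL2 i).integrable one_le_two]
    simp [hm]
  -- Popoviciu: a `[0,1]`-valued variable has variance at most `1/4`
  have hvarS : variance S P ≤ n / 4 := by
    rw [IndepFun.variance_sum (fun i _ => hL2 i) fun i _ j _ hij => hindep.indepFun hij]
    calc ∑ i ∈ Finset.range n, variance (Y i) P ≤ ∑ i ∈ Finset.range n, ((1 - 0) / 2) ^ 2 :=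
          Finset.sum_le_sum fun i _ =>
            variance_le_sq_of_bounded (ae_of_all _ (hbdd i)) (hY i).aemeasurable
      _ = n / 4 := by simp; ring
  have hn' : (0 : ℝ) < n := Nat.cast_pos.2 (Nat.pos_of_ne_zero hn)
  have hsqrt : 0 < √(n : ℝ) := Real.sqrt_pos.2 hn'
  have hset : {ω | M ≤ |√n * ((∑ i ∈ Finset.range n, Y i ω) / n - m)|} =
      {ω | M * √n ≤ |S ω - P[S]|} := by
    ext ω
    have : √n * ((∑ i ∈ Finset.range n, Y i ω) / n - m) = (S ω - P[S]) / √n := by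
      rw [hmeanS, hSdef, Finset.sum_apply]
      field_simp
      rw [Real.sq_sqrt hn'.le]
    rw [mem_ofPred_eq, mem_ofPred_eq, this, abs_div, abs_of_pos hsqrt, le_div_iff₀ hsqrt]
  rw [hset]
  refine (meas_ge_le_variance_div_sq hS (mul_pos hM hsqrt)).trans (ENNReal.ofReal_le_ofReal ?_)
  rw [mul_pow, Real.sq_sqrt hn'.le, div_le_div_iff₀ (by positivity) (by positivity)]
  nlinarith

lemma measurable_empCdf (hmeas : ∀ i, Measurable (X i)) (n : ℕ) (t : ℝ) :
    Measurable fun ω => empCdf X n ω t := by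
  simp_rw [empCdf_eq_average]
  exact (Finset.measurable_sum _ fun i _ =>
    (measurable_const.indicator measurableSet_Iic).comp (hmeas i)).div_const _

lemma measurable_qtl_empCdf (hmeas : ∀ i, Measurable (X i)) {p : ℝ} (hp0 : 0 < p) (hp1 : p < 1)
    (n : ℕ) : Measurable fun ω => qtl (empCdf X n ω) p := by
  rcases eq_or_ne n 0 with rfl | hn
  · have hzero : ∀ ω, empCdf X 0 ω = 0 := fun ω => funext fun t => by simp [empCdf]
    simp only [hzero, measurable_const]
  refine measurable_of_Iic fun x => ?_
  have : (fun ω => qtl (empCdf X n ω) p) ⁻¹' Iic x = {ω | p ≤ empCdf X n ω x} :=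
    ext fun ω => qtl_empCdf_le_iff X hn ω hp0 hp1 x
  rw [this]
  exact measurableSet_le measurable_const (measurable_empCdf hmeas n x)

lemma ae_tendsto_empCdf (hmeas : ∀ i, Measurable (X i)) (hindep : iIndepFun X P)
    (hdist : ∀ i, P.map (X i) = μ) (t : ℝ) :
    ∀ᵐ ω ∂P, Tendsto (fun n => empCdf X n ω t) atTop (𝓝 (cdfOf μ t)) := by
  set f : ℝ → ℝ := (Iic t).indicator 1
  have hf : Measurable f := measurable_const.indicator measurableSet_Iic
  have hident : ∀ i, IdentDistrib (f ∘ X i) (f ∘ X 0) P P := fun i =>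
    (IdentDistrib.mk (hmeas i).aemeasurable (hmeas 0).aemeasurable (by rw [hdist, hdist])).comp hf
  have hint : Integrable (f ∘ X 0) P :=
    (integrable_const (1 : ℝ)).mono' (hf.comp (hmeas 0)).aestronglyMeasurable
      (ae_of_all _ fun ω => by by_cases h : X 0 ω ≤ t <;> simp [f, h])
  have hslln := strong_law_ae_real (fun i => f ∘ X i) hint
    (fun i j hij => (hindep.comp (fun _ => f) fun _ => hf).indepFun hij) hident
  have hmean : P[f ∘ X 0] = cdfOf μ t := by
    rw [← hdist 0]
    exact integral_indicator_Iic_comp (hmeas 0) t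
  rw [hmean] at hslln
  simpa only [empCdf_eq_average, Function.comp_apply, f] using hslln

lemma boundedInProbability_sqrt_mul_empCdf_sub (hmeas : ∀ i, Measurable (X i))
    (hindep : iIndepFun X P) (hdist : ∀ i, P.map (X i) = μ) (t : ℝ) :
    BoundedInProbability P (fun (n : ℕ) ω => √(n : ℝ) * (empCdf X n ω t - cdfOf μ t)) atTop := by
  intro η hη
  have hlim : Tendsto (fun M : ℝ => ENNReal.ofReal (1 / (4 * M ^ 2))) atTop (𝓝 0) := by
    rw [← ENNReal.ofReal_zero]
    exact ENNReal.tendsto_ofReal (tendsto_const_nhds.div_atTop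
      ((tendsto_pow_atTop two_ne_zero).const_mul_atTop four_pos))
  obtain ⟨M, hM0, hMη⟩ :=
    ((eventually_gt_atTop 0).and (hlim.eventually (eventually_le_nhds hη))).exists
  have hf : Measurable ((Iic t).indicator (1 : ℝ → ℝ)) :=
    measurable_const.indicator measurableSet_Iic
  refine ⟨M, (eventually_ne_atTop 0).mono fun n hn => ?_⟩
  simp_rw [empCdf_eq_average]
  refine (measure_le_abs_sqrt_mul_average_sub_le (fun i => hf.comp (hmeas i))
    (hindep.comp (fun _ => _) fun _ => hf) (fun i ω => ?_) (fun i => ?_) hn hM0).trans hMη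
  · by_cases h : X i ω ≤ t <;> simp [h]
  · rw [← hdist i]
    exact integral_indicator_Iic_comp (hmeas i) t

lemma ae_tendsto_qtl_empCdf [IsProbabilityMeasure μ] (hmeas : ∀ i, Measurable (X i))
    (hindep : iIndepFun X P) (hdist : ∀ i, P.map (X i) = μ) {p : ℝ} (hp0 : 0 < p) (hp1 : p < 1)
    (hgt : ∀ x > qtl (cdfOf μ) p, p < cdfOf μ x) :
    ∀ᵐ ω ∂P, Tendsto (fun n => qtl (empCdf X n ω) p) atTop (𝓝 (qtl (cdfOf μ) p)) := by
  have hrat : ∀ᵐ ω ∂P, ∀ r : ℚ, Tendsto (fun n => empCdf X n ω r) atTop (𝓝 (cdfOf μ r)) :=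
    ae_all_iff.2 fun r => ae_tendsto_empCdf hmeas hindep hdist r
  filter_upwards [hrat] with ω hω
  refine tendsto_qtl_of_eventually ((eventually_ne_atTop 0).mono fun n hn =>
    qtl_empCdf_le_iff X hn ω hp0 hp1) (fun x hx => ?_) (fun x hx => ?_)
  · obtain ⟨r, hxr, hrc⟩ := exists_rat_btwn hx
    filter_upwards [(hω r).eventually (eventually_lt_nhds ((lt_qtl_cdfOf_iff hp0 hp1 _).1 hrc))]
      with n hn
    exact (monotone_empCdf X n ω hxr.le).trans_lt hn
  · obtain ⟨r, hcr, hrx⟩ := exists_rat_btwn hx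
    filter_upwards [(hω r).eventually (eventually_gt_nhds (hgt r hcr))] with n hn
    exact hn.le.trans (monotone_empCdf X n ω hrx.le)

end Sampling

/-- for `p ∈ (0,1)`, a cdf `F ∈ F₁⁺` continuous and strictly increasing
at `x_p := F⁻¹(p)`, and the empirical cdf `F_n` of independent random variables with
common cdf `F`, the sequence `√n · Γ_p(F, F_n)` converges to `0` in probability as
`n → ∞`. -/
theorem stmt17 {Ω : Type*} [MeasurableSpace Ω] (P : Measure Ω) [IsProbabilityMeasure P]
    (μ : Measure ℝ) [IsProbabilityMeasure μ]
    (hμ : Integrable (fun x => max x 0) μ)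
    (p : ℝ) (hp : p ∈ Ioo (0 : ℝ) 1)
    (hcont : ContinuousAt (cdfOf μ) (qtl (cdfOf μ) p))
    (hstrict : ∀ ε > (0 : ℝ),
      cdfOf μ (qtl (cdfOf μ) p - ε) < cdfOf μ (qtl (cdfOf μ) p) ∧
        cdfOf μ (qtl (cdfOf μ) p) < cdfOf μ (qtl (cdfOf μ) p + ε))
    (X : ℕ → Ω → ℝ) (hmeas : ∀ i, Measurable (X i))
    (hindep : iIndepFun X P)
    (hdist : ∀ i, Measure.map (X i) P = μ) :
    TendstoInMeasure P
      (fun (n : ℕ) ω => Real.sqrt (n : ℝ) * gapFun p (cdfOf μ) (empCdf X n ω)) atTop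
      (fun _ => (0 : ℝ)) := by
  obtain ⟨hp0, hp1⟩ := hp
  set c := qtl (cdfOf μ) p
  have hFc : cdfOf μ c = p := cdfOf_qtl_of_continuousAt hp0 hp1 hcont
  have hgt : ∀ x > c, p < cdfOf μ x := fun x hx => by
    simpa [hFc] using (hstrict (x - c) (sub_pos.2 hx)).2
  have hqtl : TendstoInMeasure P (fun n ω => qtl (empCdf X n ω) p - c) atTop fun _ => 0 := by
    refine tendstoInMeasure_of_tendsto_ae
      (fun n => ((measurable_qtl_empCdf hmeas hp0 hp1 n).sub_const c).aestronglyMeasurable) ?_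
    filter_upwards [ae_tendsto_qtl_empCdf hmeas hindep hdist hp0 hp1 hgt] with ω hω
    simpa [c] using hω.sub_const c
  refine tendstoInMeasure_of_abs_le_mul hqtl
    (boundedInProbability_sqrt_mul_empCdf_sub hmeas hindep hdist c) ?_
  filter_upwards [eventually_ne_atTop 0] with n hn ω
  have := isProbabilityMeasure_empMeasure X hn ω
  have hν := integrable_empMeasure X hn ω fun x => max x 0
  rw [← cdfOf_empMeasure, hFc, abs_mul, abs_mul, abs_of_nonneg (Real.sqrt_nonneg _),
    abs_of_nonneg (gapFun_cdfOf_nonneg hμ hν hp0 hp1)]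
  calc √n * gapFun p (cdfOf μ) (cdfOf (empMeasure X n ω))
      ≤ √n * (|qtl (cdfOf (empMeasure X n ω)) p - c| * |cdfOf (empMeasure X n ω) c - p|) :=
        mul_le_mul_of_nonneg_left (gapFun_cdfOf_le hμ hν hp0 hp1) (Real.sqrt_nonneg _)
    _ = _ := by ring
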